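/- arXiv:1502.07516 — 3 statements merged into one kernel-verified Lean document; each statement's English description precedes it below -/
import Mathlib

section
/- Let λ₁, λ₂, λ₃ and a, b, c be real numbers. If E₀ = 0, E₁ = 0 and E₂ = 0, then E₃ = 0. (This is the pointwise, eigenbasis form of the paper's main theorem: for a Killing tensor the third Nijenhuis integrability condition is implied by the Killing equation together with the first two Nijenhuis conditions.) -/
/-- Pointwise eigenbasis form of the main theorem: for a Killing tensor the third
Nijenhuis integrability condition `E₃ = 0` is implied by the Killing equation `E₀ = 0`
together with the first two Nijenhuis conditions `E₁ = 0`, `E₂ = 0`. -/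
theorem killing_third_nijenhuis_redundant
    (l1 l2 l3 a b c : ℝ)
    (hE0 : a + b + c = 0)
    (hE1 : (l1 - l2) * a + (l2 - l3) * b + (l3 - l1) * c = 0)
    (hE2 : (l1 - l2) * (l1 + l2 - l3) * a + (l2 - l3) * (l2 + l3 - l1) * b
        + (l3 - l1) * (l3 + l1 - l2) * c = 0) :
    (l1 - l2) * ((l1 + l2) ^ 2 - l1 * l2 - l2 * l3 - l3 * l1) * a
      + (l2 - l3) * ((l2 + l3) ^ 2 - l1 * l2 - l2 * l3 - l3 * l1) * b
      + (l3 - l1) * ((l3 + l1) ^ 2 - l1 * l2 - l2 * l3 - l3 * l1) * c = 0 := by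
  linear_combination
    ((-1/3) * l2 * l3 * l3 + (1/3) * l2 * l2 * l3 + (1/3) * l1 * l3 * l3
      + (-1/3) * l1 * l2 * l2 + (-1/3) * l1 * l1 * l3 + (1/3) * l1 * l1 * l2) * hE0
    + ((1/3) * l3 * l3 + (-2/3) * l2 * l3 + (1/3) * l2 * l2 + (-2/3) * l1 * l3
      + (-2/3) * l1 * l2 + (1/3) * l1 * l1) * hE1
    + ((2/3) * l3 + (2/3) * l2 + (2/3) * l1) * hE2
end

section
/- Let λ₁, λ₂, λ₃ and a, b, c be real numbers. If E₀ = 0, E₁ = 0 and E₂' = 0, then E₃' = 0. -/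
/-- Simplified pointwise form: the Killing equation `E₀ = 0`, the first Nijenhuis
condition `E₁ = 0` and the simplified second condition `E₂' = 0` imply the simplified
third condition `E₃' = 0`. -/
theorem killing_third_nijenhuis_redundant_simplified
    (l1 l2 l3 a b c : ℝ)
    (hE0 : a + b + c = 0)
    (hE1 : (l1 - l2) * a + (l2 - l3) * b + (l3 - l1) * c = 0)
    (hE2' : (l1 ^ 2 - l2 ^ 2) * a + (l2 ^ 2 - l3 ^ 2) * b + (l3 ^ 2 - l1 ^ 2) * c = 0) :
    (l1 - l2) * (l1 + l2) ^ 2 * a + (l2 - l3) * (l2 + l3) ^ 2 * b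
      + (l3 - l1) * (l3 + l1) ^ 2 * c = 0 := by
  linear_combination
    ((1:ℝ)/3) * (-l2*l3^2 + l2^2*l3 + l1*l3^2 - l1*l2^2 - l1^2*l3 + l1^2*l2) * hE0
    - (((1:ℝ)/3) * (l1^2 + l2^2 + l3^2) + (l1*l2 + l1*l3 + l2*l3)) * hE1
    + ((4:ℝ)/3) * (l1 + l2 + l3) * hE2'
end

section
/- Let n be a natural number, λ : Fin n → ℝ, and T : Fin n → Fin n → Fin n → ℝ satisfy T α β γ = T β α γ for all α, β, γ (symmetry in the first two indices). Suppose that for all α, β, γ: (i) T α β γ + T β γ α + T γ α β = 0; (ii) (λ α − λ β)·T α β γ + (λ β − λ γ)·T β γ α + (λ γ − λ α)·T γ α β = 0; (iii) (λ α − λ β)(λ α + λ β − λ γ)·T α β γ + (λ β − λ γ)(λ β + λ γ − λ α)·T β γ α + (λ γ − λ α)(λ γ + λ α − λ β)·T γ α β = 0. Then for all α, β, γ: (λ α − λ β)((λ α + λ β)² − λ α·λ β − λ β·λ γ − λ γ·λ α)·T α β γ + (λ β − λ γ)((λ β + λ γ)² − λ α·λ β − λ β·λ γ − λ γ·λ α)·T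 β γ α + (λ γ − λ α)((λ γ + λ α)² − λ α·λ β − λ β·λ γ − λ γ·λ α)·T γ α β = 0. -/
/-- Coordinate form of the main theorem at a fixed point: in an orthonormal basis
diagonalizing a Killing tensor with eigenvalues `λ`, the array `T α β γ = K_{αβ;γ}`
is symmetric in its first two indices; the Killing equation (i) together with the
first two Nijenhuis conditions (ii), (iii) imply the third Nijenhuis condition. -/
theorem killing_third_nijenhuis_redundant_coords
    (n : ℕ) (lam : Fin n → ℝ) (T : Fin n → Fin n → Fin n → ℝ)
    (hsymm : ∀ α β γ, T α β γ = T β α γ)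
    (h0 : ∀ α β γ, T α β γ + T β γ α + T γ α β = 0)
    (h1 : ∀ α β γ, (lam α - lam β) * T α β γ + (lam β - lam γ) * T β γ α
        + (lam γ - lam α) * T γ α β = 0)
    (h2 : ∀ α β γ, (lam α - lam β) * (lam α + lam β - lam γ) * T α β γ
        + (lam β - lam γ) * (lam β + lam γ - lam α) * T β γ α
        + (lam γ - lam α) * (lam γ + lam α - lam β) * T γ α β = 0) :
    ∀ α β γ, (lam α - lam β) * ((lam α + lam β) ^ 2 - lam α * lam β - lam β * lam γ - lam γ * lam α) * T α β γ
      + (lam β - lam γ) * ((lam β + lam γ) ^ 2 - lam α * lam β - lam β * lam γ - lam γ * lam α) * T β γ α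
      + (lam γ - lam α) * ((lam γ + lam α) ^ 2 - lam α * lam β - lam β * lam γ - lam γ * lam α) * T γ α β = 0 := by
  intro α β γ
  set a := lam α
  set b := lam β
  set c := lam γ
  linear_combination (-(a - b) * (b - c) * (c - a) / 3) * h0 α β γ
    + ((a ^ 2 + b ^ 2 + c ^ 2 - 2 * a * b - 2 * b * c - 2 * c * a) / 3) * h1 α β γ
    + (2 * (a + b + c) / 3) * h2 α β γ
end
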